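/- Let f : [a,b] ⊆ [−1,1] → ℝ be continuous, d ≥ 1, and suppose P* is a best degree-(d−1) approximation to f with error E_{d−1} attaining the equioscillation property at points x₁ < ... < x_{d+1} with f(xᵢ) − P*(xᵢ) = (−1)ⁱ E_{d−1}. Let g be a polynomial of degree ≤ d with sup_{x∈[a,b]} |f(x) − g(x)| ≤ η where η < E_{d−1}, and assume g ≠ P*. Define Δ(x) = (g(x) − P*(x)) / (E_{d−1} − η). Then Δ(xᵢ) has sign (−1)ⁱ and |Δ(xᵢ)| ≥ 1 for every i = 1, ..., d+1; in particular Δ has degree exactly d and d real roots interlacing the points xᵢ. -/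

import Mathlib

/-!
At each `xᵢ` we have `f − P* = ±E` while `|f − g| ≤ η`, so `g − P*` has the sign of `f − P*`
there and modulus at least `E − η`. These alternating signs give, by the intermediate value
theorem, a zero of `g − P*` strictly between consecutive points, i.e. `d` distinct zeros of a
nonzero polynomial of degree at most `d`, which therefore has degree exactly `d`.
-/

open Polynomial

theorem sub_le_mul_sub_of_abs_sub_le {s E η u p q : ℝ} (hs : |s| = 1) (hp : u - p = s * E)
    (hq : |u - q| ≤ η) : E - η ≤ s * (q - p) := by
  have hs2 : s * s = 1 := by rw [← abs_mul_abs_self, hs, one_mul]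
  have hbound : s * (u - q) ≤ η := (le_abs_self _).trans (by rwa [abs_mul, hs, one_mul])
  calc E - η ≤ E - s * (u - q) := by linarith
    _ = s * (q - p) := by linear_combination (-s) * hp - E * hs2

theorem mul_neg_of_pos_neg_one_pow_mul {k : ℕ} {u v : ℝ} (hu : 0 < (-1) ^ k * u)
    (hv : 0 < (-1) ^ (k + 1) * v) : u * v < 0 := by
  rw [pow_succ] at hv
  rcases neg_one_pow_eq_or ℝ k with h | h <;> rw [h] at hu hv <;> nlinarith

theorem exists_mem_Ioo_eq_zero_of_mul_neg {α : Type*} [ConditionallyCompleteLinearOrder α]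
    [TopologicalSpace α] [OrderTopology α] [DenselyOrdered α] {f : α → ℝ} {a b : α}
    (hab : a ≤ b) (hf : ContinuousOn f (Set.Icc a b)) (h : f a * f b < 0) :
    ∃ c ∈ Set.Ioo a b, f c = 0 := by
  rcases mul_neg_iff.1 h with ⟨ha, hb⟩ | ⟨ha, hb⟩
  · exact intermediate_value_Ioo' hab hf ⟨hb, ha⟩
  · exact intermediate_value_Ioo hab hf ⟨ha, hb⟩

theorem exists_strictMono_zeros_interlacing {n : ℕ} {f : ℝ → ℝ} (hf : Continuous f)
    {x : Fin (n + 1) → ℝ} (hx : Monotone x)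
    (hsign : ∀ i : Fin n, f (x i.castSucc) * f (x i.succ) < 0) :
    ∃ r : Fin n → ℝ, StrictMono r ∧ (∀ i, r i ∈ Set.Ioo (x i.castSucc) (x i.succ)) ∧
      ∀ i, f (r i) = 0 := by
  choose r hr_mem hr_zero using fun i : Fin n ↦
    exists_mem_Ioo_eq_zero_of_mul_neg (hx (Fin.castSucc_le_succ i)) hf.continuousOn (hsign i)
  refine ⟨r, fun i j hij ↦ ?_, hr_mem, hr_zero⟩
  calc r i < x i.succ := (hr_mem i).2
    _ ≤ x j.castSucc := hx (Fin.succ_le_castSucc_iff.2 hij)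
    _ < r j := (hr_mem j).1

theorem scaled_difference_oscillates_general
    (a b : ℝ)
    (f : ℝ → ℝ)
    (d : ℕ)
    (P : Polynomial ℝ) (hP : P.natDegree ≤ d - 1)
    (E : ℝ)
    (x : Fin (d + 1) → ℝ) (hx : StrictMono x) (hxmem : ∀ i, x i ∈ Set.Icc a b)
    (hosc : ∀ i : Fin (d + 1), f (x i) - P.eval (x i) = (-1 : ℝ) ^ ((i : ℕ) + 1) * E)
    (g : Polynomial ℝ) (hg : g.natDegree ≤ d)
    (η : ℝ) (hηE : η < E)
    (hgapp : ∀ y ∈ Set.Icc a b, |f y - g.eval y| ≤ η) :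
    (∀ i : Fin (d + 1), 1 ≤ |((E - η)⁻¹ • (g - P)).eval (x i)| ∧
        0 < (-1 : ℝ) ^ ((i : ℕ) + 1) * ((E - η)⁻¹ • (g - P)).eval (x i)) ∧
      ((E - η)⁻¹ • (g - P)).natDegree = d ∧
      ∃ r : Fin d → ℝ, (∀ i : Fin d, r i ∈ Set.Ioo (x i.castSucc) (x i.succ)) ∧
        ∀ i, ((E - η)⁻¹ • (g - P)).IsRoot (r i) := by
  set Q := (E - η)⁻¹ • (g - P)
  have hQ_eval (y : ℝ) : Q.eval y = (g.eval y - P.eval y) / (E - η) := by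
    simp [Q, div_eq_inv_mul]
  have hsign (i : Fin (d + 1)) : 1 ≤ (-1 : ℝ) ^ ((i : ℕ) + 1) * Q.eval (x i) := by
    rw [hQ_eval, mul_div_assoc', one_le_div (sub_pos.2 hηE)]
    exact sub_le_mul_sub_of_abs_sub_le (by simp) (hosc i) (hgapp _ (hxmem i))
  have hQ_ne : Q ≠ 0 := fun h ↦ by simpa [h] using (hsign 0).trans_lt' one_pos
  obtain ⟨r, hr_mono, hr_mem, hr_root⟩ := exists_strictMono_zeros_interlacing Q.continuous
    hx.monotone fun i ↦ mul_neg_of_pos_neg_one_pow_mul (k := i + 1)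
      (one_pos.trans_le (hsign i.castSucc)) (one_pos.trans_le (hsign i.succ))
  refine ⟨fun i ↦ ⟨?_, by linarith [hsign i]⟩, le_antisymm ?_ ?_, r, hr_mem, hr_root⟩
  · calc (1 : ℝ) ≤ (-1 : ℝ) ^ ((i : ℕ) + 1) * Q.eval (x i) := hsign i
      _ ≤ |(-1 : ℝ) ^ ((i : ℕ) + 1) * Q.eval (x i)| := le_abs_self _
      _ = |Q.eval (x i)| := by simp [abs_mul]
  · exact natDegree_smul_le _ _ |>.trans <| (natDegree_sub_le _ _).trans <|
      max_le hg (hP.trans (d.sub_le 1))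
  · exact not_lt.1 fun h ↦ hQ_ne <| eq_zero_of_natDegree_lt_card_of_eval_eq_zero _
      hr_mono.injective hr_root (by simpa using h)

/-- If `P*` equioscillates against `f` at `d+1` points with error `E` and `g`
approximates `f` within `η < E`, then `Δ = (g − P*)/(E − η)` has sign `(−1)ⁱ`
and magnitude `≥ 1` at each point; in particular `Δ` has degree exactly `d` and
`d` real roots interlacing the points. -/
theorem scaled_difference_oscillates
    (a b : ℝ) (hab : a < b) (hsub : Set.Icc a b ⊆ Set.Icc (-1 : ℝ) 1)
    (f : ℝ → ℝ) (hf : ContinuousOn f (Set.Icc a b))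
    (d : ℕ) (hd : 1 ≤ d)
    (P : Polynomial ℝ) (hP : P.natDegree ≤ d - 1)
    (E : ℝ) (hEbound : ∀ y ∈ Set.Icc a b, |f y - P.eval y| ≤ E)
    (x : Fin (d + 1) → ℝ) (hx : StrictMono x) (hxmem : ∀ i, x i ∈ Set.Icc a b)
    (hosc : ∀ i : Fin (d + 1), f (x i) - P.eval (x i) = (-1 : ℝ) ^ ((i : ℕ) + 1) * E)
    (g : Polynomial ℝ) (hg : g.natDegree ≤ d)
    (η : ℝ) (hη : 0 < η) (hηE : η < E)
    (hgapp : ∀ y ∈ Set.Icc a b, |f y - g.eval y| ≤ η)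
    (hne : g ≠ P) :
    (∀ i : Fin (d + 1), 1 ≤ |((E - η)⁻¹ • (g - P)).eval (x i)| ∧
        0 < (-1 : ℝ) ^ ((i : ℕ) + 1) * ((E - η)⁻¹ • (g - P)).eval (x i)) ∧
      ((E - η)⁻¹ • (g - P)).natDegree = d ∧
      ∃ r : Fin d → ℝ, (∀ i : Fin d, r i ∈ Set.Ioo (x i.castSucc) (x i.succ)) ∧
        ∀ i, ((E - η)⁻¹ • (g - P)).IsRoot (r i) :=
  scaled_difference_oscillates_general a b f d P hP E x hx hxmem hosc g hg η hηE hgapp
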